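/- arXiv:math/9812021 — 2 statements merged into one kernel-verified Lean document; each statement's English description precedes it below -/
import Mathlib

section
/- The tame symbol s(x,y) = (−1)^{ord(x)·ord(y)} · π(x^{ord(y)} / y^{ord(x)}) on a discretely valued field K with residue field k is a Steinberg symbol: it is bimultiplicative and satisfies s(x, 1−x) = 1 for all x ≠ 0, 1. -/
noncomputable section

variable {K k : Type*} [Field K] [Field k]

/-- The tame symbol `s(x,y) = (−1)^{ord(x)·ord(y)} · π(x^{ord(y)} / y^{ord(x)})` on a
discretely valued field `K` with ring of integers `O` and residue map `π : O → k`.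
(The element `x^{ord(y)}/y^{ord(x)}` is a unit of `O`, as granted by the hypothesis `hU`.) -/
def tameSymbol (O : Subring K) (π : O →+* k) (ord : Kˣ →* Multiplicative ℤ)
    (hU : ∀ x y : Kˣ,
      ((x : K) ^ (Multiplicative.toAdd (ord y)) / (y : K) ^ (Multiplicative.toAdd (ord x))) ∈ O)
    (x y : Kˣ) : k :=
  (-1 : k) ^ (Multiplicative.toAdd (ord x) * Multiplicative.toAdd (ord y)) *
    π ⟨(x : K) ^ (Multiplicative.toAdd (ord y)) / (y : K) ^ (Multiplicative.toAdd (ord x)),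
      hU x y⟩

lemma pi_mul' (O : Subring K) (π : O →+* k) (p q : K) (hp : p ∈ O) (hq : q ∈ O)
    (h : p * q ∈ O) : π ⟨p * q, h⟩ = π ⟨p, hp⟩ * π ⟨q, hq⟩ := by
  rw [← map_mul]; congr 1

lemma pi_pow' (O : Subring K) (π : O →+* k) (z : K) (hz : z ∈ O) (n : ℕ)
    (h : z ^ n ∈ O) : π ⟨z ^ n, h⟩ = (π ⟨z, hz⟩) ^ n := by
  rw [← map_pow]; congr 1

lemma pi_sub' (O : Subring K) (π : O →+* k) (p q : K) (hp : p ∈ O) (hq : q ∈ O)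
    (h : p - q ∈ O) : π ⟨p - q, h⟩ = π ⟨p, hp⟩ - π ⟨q, hq⟩ := by
  rw [← map_sub]; congr 1


-- L1: "maximal ideal closed under addition"
lemma ord_add_pos (O : Subring K) (ord : Kˣ →* Multiplicative ℤ)
    (hsurj : Function.Surjective ord)
    (hmem : ∀ x : Kˣ, (x : K) ∈ O ↔ 0 ≤ Multiplicative.toAdd (ord x))
    (z w v : Kˣ) (hz : 0 < Multiplicative.toAdd (ord z))
    (hw : 0 < Multiplicative.toAdd (ord w)) (hv : (v : K) = z + w) :
    0 < Multiplicative.toAdd (ord v) := by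
  obtain ⟨t, ht⟩ := hsurj (Multiplicative.ofAdd 1)
  have hAt : Multiplicative.toAdd (ord t) = 1 := by rw [ht]; rfl
  have hz' : ((z * t⁻¹ : Kˣ) : K) ∈ O := (hmem _).mpr (by
    rw [map_mul, map_inv, toAdd_mul, toAdd_inv, hAt]; omega)
  have hw' : ((w * t⁻¹ : Kˣ) : K) ∈ O := (hmem _).mpr (by
    rw [map_mul, map_inv, toAdd_mul, toAdd_inv, hAt]; omega)
  have hv' : ((v * t⁻¹ : Kˣ) : K) ∈ O := by
    have : ((v * t⁻¹ : Kˣ) : K) = ((z * t⁻¹ : Kˣ) : K) + ((w * t⁻¹ : Kˣ) : K) := by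
      push_cast [hv]; ring
    rw [this]; exact add_mem hz' hw'
  have := (hmem _).mp hv'
  rw [map_mul, map_inv, toAdd_mul, toAdd_inv, hAt] at this
  omega


-- π of a unit of O is nonzero; in fact π z * π z⁻¹ = 1
lemma pi_unit_mul (O : Subring K) (π : O →+* k) (ord : Kˣ →* Multiplicative ℤ)
    (hmem : ∀ x : Kˣ, (x : K) ∈ O ↔ 0 ≤ Multiplicative.toAdd (ord x))
    (z : Kˣ) (hz : Multiplicative.toAdd (ord z) = 0)
    (h1 : (z : K) ∈ O) (h2 : ((z⁻¹ : Kˣ) : K) ∈ O) :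
    π ⟨(z : K), h1⟩ * π ⟨((z⁻¹ : Kˣ) : K), h2⟩ = 1 := by
  rw [← map_mul]
  have : (⟨(z : K), h1⟩ * ⟨((z⁻¹ : Kˣ) : K), h2⟩ : O) = 1 := by
    ext; push_cast; simp
  rw [this, map_one]

lemma mem_inv (O : Subring K) (ord : Kˣ →* Multiplicative ℤ)
    (hmem : ∀ x : Kˣ, (x : K) ∈ O ↔ 0 ≤ Multiplicative.toAdd (ord x))
    (z : Kˣ) (hz : Multiplicative.toAdd (ord z) = 0) : ((z⁻¹ : Kˣ) : K) ∈ O :=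
  (hmem _).mpr (by rw [map_inv, toAdd_inv, hz]; omega)

-- L3: ker π has positive ord
lemma ord_pos_of_pi_zero (O : Subring K) (π : O →+* k) (ord : Kˣ →* Multiplicative ℤ)
    (hmem : ∀ x : Kˣ, (x : K) ∈ O ↔ 0 ≤ Multiplicative.toAdd (ord x))
    (z : Kˣ) (h : (z : K) ∈ O) (hz : π ⟨(z : K), h⟩ = 0) :
    0 < Multiplicative.toAdd (ord z) := by
  have h0 : 0 ≤ Multiplicative.toAdd (ord z) := (hmem _).mp h
  rcases h0.lt_or_eq with h0 | h0
  · exact h0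
  · exfalso
    have := pi_unit_mul O π ord hmem z h0.symm h (mem_inv O ord hmem z h0.symm)
    rw [hz, zero_mul] at this
    exact zero_ne_one this


lemma toAdd_ord_neg_one (ord : Kˣ →* Multiplicative ℤ) :
    Multiplicative.toAdd (ord (-1)) = 0 := by
  have : ord (-1) * ord (-1) = 1 := by
    rw [← map_mul]; norm_num
  have h2 : Multiplicative.toAdd (ord (-1)) + Multiplicative.toAdd (ord (-1)) = 0 := by
    rw [← toAdd_mul, this]; rfl
  omega

lemma toAdd_ord_neg (ord : Kˣ →* Multiplicative ℤ) (z : Kˣ) :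
    Multiplicative.toAdd (ord (-z)) = Multiplicative.toAdd (ord z) := by
  have : (-z : Kˣ) = -1 * z := (neg_one_mul z).symm
  rw [this, map_mul, toAdd_mul, toAdd_ord_neg_one]; omega

-- L4: positive ord implies π z = 0
lemma pi_zero_of_ord_pos (O : Subring K) (π : O →+* k) (ord : Kˣ →* Multiplicative ℤ)
    (hsurj : Function.Surjective ord)
    (hmem : ∀ x : Kˣ, (x : K) ∈ O ↔ 0 ≤ Multiplicative.toAdd (ord x))
    (hπ : Function.Surjective π)
    (z : Kˣ) (h : (z : K) ∈ O) (hz : 0 < Multiplicative.toAdd (ord z)) :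
    π ⟨(z : K), h⟩ = 0 := by
  by_contra hne
  obtain ⟨w, hw⟩ := hπ (π ⟨(z : K), h⟩)⁻¹
  have hw0 : (w : K) ≠ 0 := by
    intro h0
    have : w = 0 := Subtype.ext h0
    rw [this, map_zero] at hw
    exact inv_ne_zero hne hw.symm
  set wu : Kˣ := Units.mk0 (w : K) hw0 with hwu
  have hwmem : ((wu : Kˣ) : K) ∈ O := w.2
  have hAw : 0 ≤ Multiplicative.toAdd (ord wu) := (hmem _).mp hwmem
  have hAzw : 0 < Multiplicative.toAdd (ord (z * wu)) := by
    rw [map_mul, toAdd_mul]; omega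
  -- e = z*w - 1 ∈ ker π
  have hemem : (z : K) * (w : K) - 1 ∈ O := sub_mem (mul_mem h w.2) O.one_mem
  have hπe : π ⟨(z : K) * (w : K) - 1, hemem⟩ = 0 := by
    rw [pi_sub' O π _ _ (mul_mem h w.2) O.one_mem,
      pi_mul' O π _ _ h w.2]
    have : π ⟨(w : K), w.2⟩ = (π ⟨(z : K), h⟩)⁻¹ := by rw [← hw]
    rw [this, mul_inv_cancel₀ hne]
    have h1 : π ⟨(1 : K), O.one_mem⟩ = 1 := map_one π
    rw [h1, sub_self]
  by_cases he0 : (z : K) * (w : K) - 1 = 0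
  · -- then z * wu = 1 as units, contradiction with ord > 0
    have : z * wu = 1 := by
      ext
      push_cast
      rw [sub_eq_zero] at he0
      exact he0
    rw [this, map_one] at hAzw
    simp at hAzw
  · set eu : Kˣ := Units.mk0 _ he0 with heu
    have hAe : 0 < Multiplicative.toAdd (ord eu) :=
      ord_pos_of_pi_zero O π ord hmem eu hemem hπe
    have hAne : 0 < Multiplicative.toAdd (ord (-eu)) := by
      rw [toAdd_ord_neg]; exact hAe
    have : 0 < Multiplicative.toAdd (ord (1 : Kˣ)) := by
      refine ord_add_pos O ord hsurj hmem (z * wu) (-eu) 1 hAzw hAne ?_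
      simp only [Units.val_one, Units.val_mul, Units.val_neg, hwu, heu, Units.val_mk0]
      ring
    simp at this

lemma pi_one_sub (O : Subring K) (π : O →+* k) (ord : Kˣ →* Multiplicative ℤ)
    (hsurj : Function.Surjective ord)
    (hmem : ∀ x : Kˣ, (x : K) ∈ O ↔ 0 ≤ Multiplicative.toAdd (ord x))
    (hπ : Function.Surjective π)
    (z : Kˣ) (hz : 0 < Multiplicative.toAdd (ord z))
    (h : (1 : K) - (z : K) ∈ O) : π ⟨(1 : K) - (z : K), h⟩ = 1 := by
  have hzm : (z : K) ∈ O := (hmem z).mpr hz.le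
  rw [pi_sub' O π _ _ O.one_mem hzm,
    pi_zero_of_ord_pos O π ord hsurj hmem hπ z hzm hz]
  have h1 : π ⟨(1 : K), O.one_mem⟩ = 1 := map_one π
  rw [h1, sub_zero]

lemma ord_one_sub_zero (O : Subring K) (ord : Kˣ →* Multiplicative ℤ)
    (hsurj : Function.Surjective ord)
    (hmem : ∀ x : Kˣ, (x : K) ∈ O ↔ 0 ≤ Multiplicative.toAdd (ord x))
    (z v : Kˣ) (hz : 0 < Multiplicative.toAdd (ord z))
    (hv : (v : K) = 1 - (z : K)) : Multiplicative.toAdd (ord v) = 0 := by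
  have hvm : (v : K) ∈ O := by
    rw [hv]; exact sub_mem O.one_mem ((hmem z).mpr hz.le)
  have h0 : 0 ≤ Multiplicative.toAdd (ord v) := (hmem v).mp hvm
  rcases h0.lt_or_eq with h1 | h1
  · exfalso
    have : 0 < Multiplicative.toAdd (ord (1 : Kˣ)) := by
      refine ord_add_pos O ord hsurj hmem v z 1 h1 hz ?_
      rw [Units.val_one, hv]; ring
    simp at this
  · omega

lemma tameSymbol_eq (O : Subring K) (π : O →+* k) (ord : Kˣ →* Multiplicative ℤ)
    (hU : ∀ x y : Kˣ,
      ((x : K) ^ (Multiplicative.toAdd (ord y)) / (y : K) ^ (Multiplicative.toAdd (ord x))) ∈ O)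
    (x y : Kˣ) (p : K) (hp : p ∈ O)
    (h : (x : K) ^ (Multiplicative.toAdd (ord y)) / (y : K) ^ (Multiplicative.toAdd (ord x)) = p) :
    tameSymbol O π ord hU x y =
      (-1 : k) ^ (Multiplicative.toAdd (ord x) * Multiplicative.toAdd (ord y)) * π ⟨p, hp⟩ := by
  subst h; rfl

lemma tame_mul_left (O : Subring K) (π : O →+* k) (ord : Kˣ →* Multiplicative ℤ)
    (hU : ∀ x y : Kˣ,
      ((x : K) ^ (Multiplicative.toAdd (ord y)) / (y : K) ^ (Multiplicative.toAdd (ord x))) ∈ O)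
    (x x' y : Kˣ) :
    tameSymbol O π ord hU (x * x') y = tameSymbol O π ord hU x y * tameSymbol O π ord hU x' y := by
  have ha : Multiplicative.toAdd (ord (x * x')) =
      Multiplicative.toAdd (ord x) + Multiplicative.toAdd (ord x') := by
    rw [map_mul, toAdd_mul]
  rw [tameSymbol_eq O π ord hU (x * x') y _ (mul_mem (hU x y) (hU x' y))
    (by
      rw [ha, Units.val_mul, mul_zpow, zpow_add₀ (Units.ne_zero y), div_mul_div_comm]),
    pi_mul' O π _ _ (hU x y) (hU x' y)]
  unfold tameSymbol
  rw [ha, add_mul, zpow_add₀ (neg_ne_zero.mpr (one_ne_zero : (1:k) ≠ 0))]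
  ring

lemma tame_mul_right (O : Subring K) (π : O →+* k) (ord : Kˣ →* Multiplicative ℤ)
    (hU : ∀ x y : Kˣ,
      ((x : K) ^ (Multiplicative.toAdd (ord y)) / (y : K) ^ (Multiplicative.toAdd (ord x))) ∈ O)
    (x y y' : Kˣ) :
    tameSymbol O π ord hU x (y * y') = tameSymbol O π ord hU x y * tameSymbol O π ord hU x y' := by
  have hb : Multiplicative.toAdd (ord (y * y')) =
      Multiplicative.toAdd (ord y) + Multiplicative.toAdd (ord y') := by
    rw [map_mul, toAdd_mul]
  rw [tameSymbol_eq O π ord hU x (y * y') _ (mul_mem (hU x y) (hU x y'))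
    (by
      rw [hb, Units.val_mul, mul_zpow, zpow_add₀ (Units.ne_zero x), div_mul_div_comm]),
    pi_mul' O π _ _ (hU x y) (hU x y')]
  unfold tameSymbol
  rw [hb, mul_add, zpow_add₀ (neg_ne_zero.mpr (one_ne_zero : (1:k) ≠ 0))]
  ring

lemma piO_congr (O : Subring K) (π : O →+* k) (p q : K) (hp : p ∈ O) (hq : q ∈ O)
    (h : p = q) : π ⟨p, hp⟩ = π ⟨q, hq⟩ := by subst h; rfl

lemma tame_steinberg (O : Subring K) (π : O →+* k)
    (ord : Kˣ →* Multiplicative ℤ) (hsurj : Function.Surjective ord)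
    (hmem : ∀ x : Kˣ, (x : K) ∈ O ↔ 0 ≤ Multiplicative.toAdd (ord x))
    (hπ : Function.Surjective π)
    (hU : ∀ x y : Kˣ,
      ((x : K) ^ (Multiplicative.toAdd (ord y)) / (y : K) ^ (Multiplicative.toAdd (ord x))) ∈ O)
    (x : Kˣ) (hx : (x : K) ≠ 1) :
    tameSymbol O π ord hU x (Units.mk0 ((1 : K) - x) (sub_ne_zero.mpr (Ne.symm hx))) = 1 := by
  set y : Kˣ := Units.mk0 ((1 : K) - x) (sub_ne_zero.mpr (Ne.symm hx)) with hy
  have hyval : (y : K) = 1 - (x : K) := rfl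
  set a := Multiplicative.toAdd (ord x) with ha
  rcases lt_trichotomy a 0 with hneg | hzero | hpos
  · -- a < 0
    have hxinv : ((x⁻¹ : Kˣ) : K) = ((x : K))⁻¹ := Units.val_inv_eq_inv_val x
    have hu0 : (1 : K) - ((x⁻¹ : Kˣ) : K) ≠ 0 := by
      rw [hxinv]
      intro h
      apply hx
      have hx0 : (x : K) ≠ 0 := Units.ne_zero x
      field_simp at h
      rw [mul_zero, sub_eq_zero] at h
      exact h
    set u : Kˣ := Units.mk0 _ hu0 with hu
    have huval : (u : K) = 1 - ((x⁻¹ : Kˣ) : K) := rfl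
    have hAx' : 0 < Multiplicative.toAdd (ord x⁻¹) := by
      rw [map_inv, toAdd_inv]; omega
    have hAu : Multiplicative.toAdd (ord u) = 0 :=
      ord_one_sub_zero O ord hsurj hmem x⁻¹ u hAx' huval
    have hyu : (y : K) = -(x : K) * (u : K) := by
      rw [hyval, huval, hxinv]
      have hx0 : (x : K) ≠ 0 := Units.ne_zero x
      field_simp
      ring
    have hyeq : y = -x * u := by
      ext
      rw [hyu]
      push_cast
      ring
    have hb : Multiplicative.toAdd (ord y) = a := by
      rw [hyeq, map_mul, toAdd_mul, toAdd_ord_neg, hAu, ← ha, add_zero]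
    set n : ℕ := (-a).toNat with hn
    have han : a = -(n : ℤ) := by omega
    have humem : (u : K) ∈ O := (hmem u).mpr (by omega)
    have hpmem : (-(u : K)) ^ n ∈ O := pow_mem (neg_mem humem) n
    have hxy : (x : K) / (y : K) = (-(u : K))⁻¹ := by
      rw [hyu]
      have hx0 : (x : K) ≠ 0 := Units.ne_zero x
      have hu0' : (u : K) ≠ 0 := Units.ne_zero u
      field_simp
    rw [tameSymbol_eq O π ord hU x y _ hpmem (by
      rw [hb, ← ha, ← div_zpow, hxy, inv_zpow', han, neg_neg, zpow_natCast])]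
    rw [pi_pow' O π _ (neg_mem humem) n]
    have hπu : π ⟨(u : K), humem⟩ = 1 := by
      rw [piO_congr O π _ _ humem (sub_mem O.one_mem ((hmem x⁻¹).mpr hAx'.le)) huval]
      exact pi_one_sub O π ord hsurj hmem hπ x⁻¹ hAx' _
    have hπnu : π ⟨-(u : K), neg_mem humem⟩ = -1 := by
      have : (⟨-(u : K), neg_mem humem⟩ : O) = -⟨(u : K), humem⟩ := rfl
      rw [this, map_neg, hπu]
    rw [hπnu, hb, ← ha, han]
    rw [neg_mul_neg, ← Int.natCast_mul, zpow_natCast, ← pow_add]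
    have : n * n + n = n * (n + 1) := by ring
    rw [this]
    exact Even.neg_one_pow (Nat.even_mul_succ_self n)
  · -- a = 0
    have hxm : (x : K) ∈ O := (hmem x).mpr (by omega)
    have hym : (y : K) ∈ O := by rw [hyval]; exact sub_mem O.one_mem hxm
    have hb0 : 0 ≤ Multiplicative.toAdd (ord y) := (hmem y).mp hym
    rcases hb0.lt_or_eq with hbpos | hbzero
    · -- b > 0 : π x = 1
      set b := Multiplicative.toAdd (ord y) with hbb
      set n : ℕ := b.toNat with hn
      have hbn : b = (n : ℤ) := by omega
      have hπy : π ⟨(y : K), hym⟩ = 0 := pi_zero_of_ord_pos O π ord hsurj hmem hπ y hym hbpos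
      have hπx : π ⟨(x : K), hxm⟩ = 1 := by
        rw [piO_congr O π _ ((1:K) - (y:K)) hxm (sub_mem O.one_mem hym) (by rw [hyval]; ring)]
        rw [pi_sub' O π _ _ O.one_mem hym, hπy]
        have h1 : π ⟨(1 : K), O.one_mem⟩ = 1 := map_one π
        rw [h1, sub_zero]
      rw [tameSymbol_eq O π ord hU x y _ (pow_mem hxm n) (by
        rw [← ha, ← hbb, hzero, zpow_zero, div_one, hbn, zpow_natCast])]
      rw [pi_pow' O π _ hxm n, hπx, one_pow, ← ha, hzero, zero_mul, zpow_zero, mul_one]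
    · -- b = 0
      rw [tameSymbol_eq O π ord hU x y 1 O.one_mem (by
        rw [← ha, hzero, ← hbzero, zpow_zero, zpow_zero, div_one])]
      have h1 : π ⟨(1 : K), O.one_mem⟩ = 1 := map_one π
      rw [h1, ← ha, hzero, zero_mul, zpow_zero, one_mul]
  · -- a > 0
    have hb : Multiplicative.toAdd (ord y) = 0 :=
      ord_one_sub_zero O ord hsurj hmem x y hpos hyval
    set n : ℕ := a.toNat with hn
    have han : a = (n : ℤ) := by omega
    have hyinvmem : ((y⁻¹ : Kˣ) : K) ∈ O := mem_inv O ord hmem y hb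
    have hπy : π ⟨(y : K), (hmem y).mpr hb.ge⟩ = 1 := by
      rw [piO_congr O π _ ((1:K) - (x:K)) _ (sub_mem O.one_mem ((hmem x).mpr hpos.le)) hyval]
      exact pi_one_sub O π ord hsurj hmem hπ x hpos _
    have hπyinv : π ⟨((y⁻¹ : Kˣ) : K), hyinvmem⟩ = 1 := by
      have := pi_unit_mul O π ord hmem y hb ((hmem y).mpr hb.ge) hyinvmem
      rw [hπy, one_mul] at this
      exact this
    rw [tameSymbol_eq O π ord hU x y _ (pow_mem hyinvmem n) (by
      rw [hb, ← ha, zpow_zero, han, ← zpow_natCast ((y⁻¹ : Kˣ) : K) n]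
      push_cast
      rw [inv_zpow', one_div, ← zpow_neg])]
    rw [pi_pow' O π _ hyinvmem n, hπyinv, one_pow, hb, mul_zero, zpow_zero, mul_one]

/-- the tame symbol on a complete discretely valued field `K` with
valuation `ord : K* → ℤ`, ring of integers `O` and residue map `π : O → k` is a
Steinberg symbol: it is bimultiplicative, and `s(x, 1−x) = 1` for all `x ≠ 0, 1`. -/
theorem tameSymbol_is_steinberg
    (O : Subring K) (π : O →+* k)
    (ord : Kˣ →* Multiplicative ℤ) (hsurj : Function.Surjective ord)
    (hmem : ∀ x : Kˣ, (x : K) ∈ O ↔ 0 ≤ Multiplicative.toAdd (ord x))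
    (hπ : Function.Surjective π)
    (hU : ∀ x y : Kˣ,
      ((x : K) ^ (Multiplicative.toAdd (ord y)) / (y : K) ^ (Multiplicative.toAdd (ord x))) ∈ O) :
    (∀ x x' y : Kˣ,
      tameSymbol O π ord hU (x * x') y = tameSymbol O π ord hU x y * tameSymbol O π ord hU x' y) ∧
    (∀ x y y' : Kˣ,
      tameSymbol O π ord hU x (y * y') = tameSymbol O π ord hU x y * tameSymbol O π ord hU x y') ∧
    (∀ (x : Kˣ) (hx : (x : K) ≠ 1),
      tameSymbol O π ord hU x (Units.mk0 ((1 : K) - x) (sub_ne_zero.mpr (Ne.symm hx))) = 1) := by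
  exact ⟨tame_mul_left O π ord hU, tame_mul_right O π ord hU,
    fun x hx => tame_steinberg O π ord hsurj hmem hπ hU x hx⟩

end
end

section
/- Let E be a free ℂ[[x]]-module with an involution s satisfying s(x·e) = −x·s(e), and suppose s induces the identity on E/xE. Let f₀, f₁ ∈ ℂ((x)). Then the operator f₀(x)·Id + f₁(x)·s on E ⊗_{ℂ[[x]]} ℂ((x)) preserves E if and only if ord_x(f₀) ≥ −1, ord_x(f₁) ≥ −1, and Res(f₀) + Res(f₁) = 0. -/
open scoped TensorProduct

noncomputable section

set_option maxHeartbeats 1600000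

lemma exists_coe' (g : LaurentSeries ℂ) (h : ∀ n < (0:ℤ), g.coeff n = 0) :
    ∃ p : PowerSeries ℂ, (p : LaurentSeries ℂ) = g := by
  refine ⟨PowerSeries.mk fun n => g.coeff n, ?_⟩
  ext n
  rw [PowerSeries.coeff_coe]
  split_ifs with h'
  · exact (h n h').symm
  · push_neg at h'
    rw [PowerSeries.coeff_mk]
    congr 1
    exact Int.natAbs_of_nonneg h'

lemma coeff_mul_X' (f : LaurentSeries ℂ) (n : ℤ) :
    (f * ((PowerSeries.X : PowerSeries ℂ) : LaurentSeries ℂ)).coeff n = f.coeff (n - 1) := by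
  rw [PowerSeries.coe_X]
  have := HahnSeries.coeff_mul_single_add (b := (1:ℤ)) (r := (1:ℂ)) (x := f) (a := n - 1)
  rw [sub_add_cancel] at this
  rw [this, mul_one]

lemma order_ge_neg_one' (f : LaurentSeries ℂ) (h : ∀ n < (-1:ℤ), f.coeff n = 0) :
    -1 ≤ f.order := by
  by_cases hf : f = 0
  · simp [hf, HahnSeries.order_zero]
  · by_contra hlt
    push_neg at hlt
    exact (mt HahnSeries.coeff_order_eq_zero.mp hf) (h _ hlt)

/-- auxiliary `O`-linear functional on the tensor product -/
def phiAux {E : Type*} [AddCommGroup E] [Module (PowerSeries ℂ) E]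
    (ℓ : E →ₗ[PowerSeries ℂ] LaurentSeries ℂ) :
    (LaurentSeries ℂ ⊗[PowerSeries ℂ] E) →ₗ[PowerSeries ℂ] LaurentSeries ℂ :=
  TensorProduct.lift (LinearMap.mk₂ (PowerSeries ℂ) (fun f e => f * ℓ e)
    (fun f f' e => add_mul _ _ _)
    (fun r f e => smul_mul_assoc r f (ℓ e))
    (fun f e e' => show f * ℓ (e + e') = f * ℓ e + f * ℓ e' by rw [map_add, mul_add])
    (fun r f e => show f * ℓ (r • e) = r • (f * ℓ e) by rw [map_smul, mul_smul_comm]))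

lemma phiAux_tmul {E : Type*} [AddCommGroup E] [Module (PowerSeries ℂ) E]
    (ℓ : E →ₗ[PowerSeries ℂ] LaurentSeries ℂ) (f : LaurentSeries ℂ) (e : E) :
    phiAux ℓ (f ⊗ₜ[PowerSeries ℂ] e) = f * ℓ e := rfl

lemma sigma0_X (σ₀ : PowerSeries ℂ →+* PowerSeries ℂ)
    (hσ₀ : ∀ (f : PowerSeries ℂ) (n : ℕ),
      PowerSeries.coeff n (σ₀ f) = (-1 : ℂ) ^ n * PowerSeries.coeff n f) :
    σ₀ PowerSeries.X = - PowerSeries.X := by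
  ext n
  rw [hσ₀, map_neg, PowerSeries.coeff_X]
  split_ifs with h
  · subst h; ring
  · ring


/-- let `E` be a free `ℂ[[x]]`-module with a `ℂ`-linear involution `s`
satisfying `s(x·e) = −x·s(e)` (i.e. semilinear over the substitution `σ₀ : x ↦ −x` of
`ℂ[[x]]`), inducing the identity on `E/xE`.  Extend `s` to an operator `ŝ` on
`E_K = ℂ((x)) ⊗_{ℂ[[x]]} E` semilinearly over the substitution `σ : x ↦ −x` of `ℂ((x))`.
For `f₀, f₁ ∈ ℂ((x))`, the operator `f₀·Id + f₁·ŝ` on `E_K` preserves (the image of) `E`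
if and only if `ord_x f₀ ≥ −1`, `ord_x f₁ ≥ −1` and `Res f₀ + Res f₁ = 0`. -/
theorem twisted_involution_preserves_lattice_iff
    {E : Type*} [AddCommGroup E] [Module (PowerSeries ℂ) E]
    [Module.Free (PowerSeries ℂ) E] [Nontrivial E]
    -- the substitution `x ↦ -x` on `ℂ[[x]]`
    (σ₀ : PowerSeries ℂ →+* PowerSeries ℂ)
    (hσ₀ : ∀ (f : PowerSeries ℂ) (n : ℕ),
      PowerSeries.coeff n (σ₀ f) = (-1 : ℂ) ^ n * PowerSeries.coeff n f)
    -- the involution `s` of `E`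
    (s : E →+ E)
    (hs_semilinear : ∀ (f : PowerSeries ℂ) (e : E), s (f • e) = σ₀ f • s e)
    (hs_invol : ∀ e : E, s (s e) = e)
    -- `s` induces the identity on `E/xE`
    (hs_bar : ∀ e : E, ∃ e' : E, s e - e = (PowerSeries.X : PowerSeries ℂ) • e')
    -- the substitution `x ↦ -x` on `ℂ((x))`
    (σ : LaurentSeries ℂ →+* LaurentSeries ℂ)
    (hσ : ∀ (f : LaurentSeries ℂ) (n : ℤ), (σ f).coeff n = (-1 : ℂ) ^ n * f.coeff n)
    -- the semilinear extension `ŝ` of `s` to `E_K = ℂ((x)) ⊗_{ℂ[[x]]} E`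
    (shat : (LaurentSeries ℂ ⊗[PowerSeries ℂ] E) →+ (LaurentSeries ℂ ⊗[PowerSeries ℂ] E))
    (hshat : ∀ (f : LaurentSeries ℂ) (e : E),
      shat (f ⊗ₜ[PowerSeries ℂ] e) = (σ f) ⊗ₜ[PowerSeries ℂ] (s e))
    (hshat_semilinear : ∀ (f : LaurentSeries ℂ) (v : LaurentSeries ℂ ⊗[PowerSeries ℂ] E),
      shat (f • v) = σ f • shat v)
    (f₀ f₁ : LaurentSeries ℂ) :
    (∀ e : E, ∃ e' : E,
        f₀ • ((1 : LaurentSeries ℂ) ⊗ₜ[PowerSeries ℂ] e) +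
          f₁ • shat ((1 : LaurentSeries ℂ) ⊗ₜ[PowerSeries ℂ] e) =
        (1 : LaurentSeries ℂ) ⊗ₜ[PowerSeries ℂ] e') ↔
      (-1 ≤ f₀.order ∧ -1 ≤ f₁.order ∧ f₀.coeff (-1) + f₁.coeff (-1) = 0) := by
  have hcast : ∀ p : PowerSeries ℂ,
      algebraMap (PowerSeries ℂ) (LaurentSeries ℂ) p = (p : LaurentSeries ℂ) := fun _ => rfl
  constructor
  · intro H
    -- choose a basis element
    set b := Module.Free.chooseBasis (PowerSeries ℂ) E with hb
    obtain ⟨i⟩ := b.index_nonempty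
    set ℓ : E →ₗ[PowerSeries ℂ] LaurentSeries ℂ :=
      (Algebra.linearMap (PowerSeries ℂ) (LaurentSeries ℂ)).comp (b.coord i) with hℓ
    have hℓ_apply : ∀ e : E, ℓ e = ((b.coord i e : PowerSeries ℂ) : LaurentSeries ℂ) :=
      fun e => rfl
    have key : ∀ e : E, ∃ p : PowerSeries ℂ,
        f₀ * ℓ e + f₁ * ℓ (s e) = (p : LaurentSeries ℂ) := by
      intro e
      obtain ⟨e', he'⟩ := H e
      refine ⟨b.coord i e', ?_⟩
      have h1 : shat ((1 : LaurentSeries ℂ) ⊗ₜ[PowerSeries ℂ] e)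
          = (1 : LaurentSeries ℂ) ⊗ₜ[PowerSeries ℂ] (s e) := by rw [hshat, map_one]
      rw [h1] at he'
      have := congrArg (phiAux ℓ) he'
      rw [map_add, TensorProduct.smul_tmul', TensorProduct.smul_tmul',
        smul_eq_mul, smul_eq_mul, mul_one, mul_one,
        phiAux_tmul, phiAux_tmul, phiAux_tmul, one_mul] at this
      rw [this, hℓ_apply]
    obtain ⟨e₁, he₁⟩ := hs_bar (b i)
    have hsbi : s (b i) = PowerSeries.X • e₁ + b i := sub_eq_iff_eq_add.mp he₁
    set c : PowerSeries ℂ := b.coord i e₁ with hc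
    set u : PowerSeries ℂ := PowerSeries.X * c + 1 with hu
    have hℓbi : ℓ (b i) = 1 := by
      rw [hℓ_apply]
      simp [Module.Basis.coord_apply, Module.Basis.repr_self]
    have hℓsbi : ℓ (s (b i)) = (u : LaurentSeries ℂ) := by
      rw [hsbi, hℓ_apply]
      congr 1
      simp [hu, hc, Module.Basis.coord_apply, Module.Basis.repr_self, mul_comm]
    -- first relation : e = b i
    obtain ⟨a, ha⟩ := key (b i)
    rw [hℓbi, hℓsbi, mul_one] at ha
    -- second relation : e = X • b i
    obtain ⟨b', hb'⟩ := key ((PowerSeries.X : PowerSeries ℂ) • b i)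
    have hsX : s ((PowerSeries.X : PowerSeries ℂ) • b i)
        = -((PowerSeries.X : PowerSeries ℂ) • s (b i)) := by
      rw [hs_semilinear, sigma0_X σ₀ hσ₀, neg_smul]
    have hℓX : ℓ ((PowerSeries.X : PowerSeries ℂ) • b i) = ((PowerSeries.X : PowerSeries ℂ) : LaurentSeries ℂ) := by
      rw [map_smul, hℓbi, Algebra.smul_def, hcast, mul_one]
    have hℓsX : ℓ (s ((PowerSeries.X : PowerSeries ℂ) • b i))
        = -(((PowerSeries.X : PowerSeries ℂ) : LaurentSeries ℂ) * (u : LaurentSeries ℂ)) := by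
      rw [hsX, map_neg, map_smul, hℓsbi, Algebra.smul_def, hcast]
    rw [hℓX, hℓsX] at hb'
    -- combine
    have h2 : (2 : LaurentSeries ℂ) * (f₁ * ((PowerSeries.X : PowerSeries ℂ) : LaurentSeries ℂ) * (u : LaurentSeries ℂ))
        = ((PowerSeries.X * a : PowerSeries ℂ) : LaurentSeries ℂ)
          - (b' : LaurentSeries ℂ) := by
      rw [PowerSeries.coe_mul, ← ha, ← hb']
      ring
    have hZ : ∀ n < (0:ℤ), (f₁ * ((PowerSeries.X : PowerSeries ℂ) : LaurentSeries ℂ) * (u : LaurentSeries ℂ)).coeff n = 0 := by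
      intro n hn
      have hcoeff := congrArg (fun g : LaurentSeries ℂ => g.coeff n) h2
      simp only [HahnSeries.coeff_sub, PowerSeries.coeff_coe, if_pos hn, sub_zero] at hcoeff
      have h2' : (2 : LaurentSeries ℂ) * (f₁ * ((PowerSeries.X : PowerSeries ℂ) : LaurentSeries ℂ) * (u : LaurentSeries ℂ))
          = (f₁ * ((PowerSeries.X : PowerSeries ℂ) : LaurentSeries ℂ) * (u : LaurentSeries ℂ)) + (f₁ * ((PowerSeries.X : PowerSeries ℂ) : LaurentSeries ℂ) * (u : LaurentSeries ℂ)) := by ring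
      rw [h2', HahnSeries.coeff_add] at hcoeff
      exact add_self_eq_zero.mp hcoeff
    obtain ⟨w, hw⟩ := exists_coe' _ hZ
    have hunit : IsUnit u := by
      rw [PowerSeries.isUnit_iff_constantCoeff]
      simp [hu]
    obtain ⟨v, hv⟩ := hunit.exists_right_inv
    have hq : ((w * v : PowerSeries ℂ) : LaurentSeries ℂ) = f₁ * ((PowerSeries.X : PowerSeries ℂ) : LaurentSeries ℂ) := by
      rw [PowerSeries.coe_mul, hw]
      calc f₁ * ((PowerSeries.X : PowerSeries ℂ) : LaurentSeries ℂ) * ↑u * ↑v = f₁ * ((PowerSeries.X : PowerSeries ℂ) : LaurentSeries ℂ) * ((u * v : PowerSeries ℂ) : LaurentSeries ℂ) := by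
            rw [PowerSeries.coe_mul]; ring
        _ = f₁ * ((PowerSeries.X : PowerSeries ℂ) : LaurentSeries ℂ) := by rw [hv, PowerSeries.coe_one, mul_one]
    set q : PowerSeries ℂ := w * v with hqdef
    -- coefficient conclusions for f₁
    have hf1 : ∀ n < (-1:ℤ), f₁.coeff n = 0 := by
      intro n hn
      have : f₁.coeff n = (f₁ * ((PowerSeries.X : PowerSeries ℂ) : LaurentSeries ℂ)).coeff (n + 1) := by
        rw [coeff_mul_X', add_sub_cancel_right]
      rw [this, ← hq, PowerSeries.coeff_coe, if_pos (by omega)]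
    have hord1 : -1 ≤ f₁.order := order_ge_neg_one' _ hf1
    -- f₀ + f₁ comes from a power series
    have hXc : ((PowerSeries.X * c : PowerSeries ℂ) : LaurentSeries ℂ)
        = ((PowerSeries.X : PowerSeries ℂ) : LaurentSeries ℂ) * (c : LaurentSeries ℂ) := by rw [PowerSeries.coe_mul]
    have hU1 : (u : LaurentSeries ℂ) = ((PowerSeries.X : PowerSeries ℂ) : LaurentSeries ℂ) * (c : LaurentSeries ℂ) + 1 := by
      rw [hu, PowerSeries.coe_add, PowerSeries.coe_one, hXc]
    have hp : ((a - q * c : PowerSeries ℂ) : LaurentSeries ℂ) = f₀ + f₁ := by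
      rw [PowerSeries.coe_sub, PowerSeries.coe_mul, hq, ← ha, hU1]
      ring
    have hpc : ∀ n < (0:ℤ), f₀.coeff n + f₁.coeff n = 0 := by
      intro n hn
      have h' : ((a - q * c : PowerSeries ℂ) : LaurentSeries ℂ).coeff n
          = f₀.coeff n + f₁.coeff n := by rw [hp, HahnSeries.coeff_add]
      rw [PowerSeries.coeff_coe, if_pos hn] at h'
      exact h'.symm
    have hf0 : ∀ n < (-1:ℤ), f₀.coeff n = 0 := by
      intro n hn
      have hsumc := hpc n (by omega)
      rw [hf1 n hn] at hsumc
      simpa using hsumc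
    exact ⟨order_ge_neg_one' _ hf0, hord1, hpc (-1) (by omega)⟩
  · rintro ⟨h0, h1, hres⟩ e
    obtain ⟨e₁, he₁⟩ := hs_bar e
    have hse : s e = PowerSeries.X • e₁ + e := sub_eq_iff_eq_add.mp he₁
    have hp : ∃ p : PowerSeries ℂ, (p : LaurentSeries ℂ) = f₀ + f₁ := by
      apply exists_coe'
      intro n hn
      rw [HahnSeries.coeff_add]
      rcases eq_or_lt_of_le (show n ≤ -1 by omega) with h | h
      · subst h; exact hres
      · rw [HahnSeries.coeff_eq_zero_of_lt_order (lt_of_lt_of_le h h0),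
          HahnSeries.coeff_eq_zero_of_lt_order (lt_of_lt_of_le h h1), add_zero]
    have hq : ∃ qq : PowerSeries ℂ, (qq : LaurentSeries ℂ) = f₁ * ((PowerSeries.X : PowerSeries ℂ) : LaurentSeries ℂ) := by
      apply exists_coe'
      intro n hn
      rw [coeff_mul_X']
      exact HahnSeries.coeff_eq_zero_of_lt_order
        (lt_of_lt_of_le (by omega : n - 1 < -1) h1)
    obtain ⟨p, hp⟩ := hp
    obtain ⟨q, hq⟩ := hq
    refine ⟨p • e + q • e₁, ?_⟩
    have h1' : shat ((1 : LaurentSeries ℂ) ⊗ₜ[PowerSeries ℂ] e)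
        = (1 : LaurentSeries ℂ) ⊗ₜ[PowerSeries ℂ] (s e) := by rw [hshat, map_one]
    have h1smul : ∀ r : PowerSeries ℂ, r • (1 : LaurentSeries ℂ) = (r : LaurentSeries ℂ) := by
      intro r; rw [Algebra.smul_def, hcast, mul_one]
    have hL : f₁ • ((1 : LaurentSeries ℂ) ⊗ₜ[PowerSeries ℂ] (s e))
        = f₁ ⊗ₜ[PowerSeries ℂ] e
          + ((q : PowerSeries ℂ) : LaurentSeries ℂ) ⊗ₜ[PowerSeries ℂ] e₁ := by
      rw [TensorProduct.smul_tmul', smul_eq_mul, mul_one, hse, TensorProduct.tmul_add,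
        TensorProduct.tmul_smul,
        ← algebraMap_smul (LaurentSeries ℂ) (PowerSeries.X : PowerSeries ℂ)
          (f₁ ⊗ₜ[PowerSeries ℂ] e₁),
        hcast, TensorProduct.smul_tmul', smul_eq_mul,
        mul_comm ((PowerSeries.X : PowerSeries ℂ) : LaurentSeries ℂ) f₁, ← hq, add_comm]
    have hF : f₀ • ((1 : LaurentSeries ℂ) ⊗ₜ[PowerSeries ℂ] e)
        = f₀ ⊗ₜ[PowerSeries ℂ] e := by
      rw [TensorProduct.smul_tmul', smul_eq_mul, mul_one]
    have hR : (1 : LaurentSeries ℂ) ⊗ₜ[PowerSeries ℂ] (p • e + q • e₁)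
        = ((p : PowerSeries ℂ) : LaurentSeries ℂ) ⊗ₜ[PowerSeries ℂ] e
          + ((q : PowerSeries ℂ) : LaurentSeries ℂ) ⊗ₜ[PowerSeries ℂ] e₁ := by
      rw [TensorProduct.tmul_add, ← TensorProduct.smul_tmul p (1 : LaurentSeries ℂ) e,
        ← TensorProduct.smul_tmul q (1 : LaurentSeries ℂ) e₁, h1smul, h1smul]
    rw [h1', hL, hF, hR, hp, TensorProduct.add_tmul]
    abel

end
end
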